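/- arXiv:2212.12704 — 2 statements merged into one kernel-verified Lean document; each statement's English description precedes it below -/
import Mathlib

section
/- Let V : ℕ × ℕ → ℝ and p_i, p_j ∈ [0,1] with p_j ≥ p_i. Suppose V is (coordinatewise) nonincreasing and satisfies the probabilistic supermodularity inequality p_j·V(s ∧ s°) + (p_j − p_i)·V(s ∨ s°) ≥ p_j·V(s) + (p_j − p_i)·V(s°) for all s = (τ_i, τ_j) and s° = (τ_i'', τ_j') with τ_i'' ≤ τ_i and τ_j' ≥ τ_j. Then the threshold implication holds: if p_i·V(1, τ_j+1) + (1−p_i)·V(τ_i+1, τ_j+1) ≥ p_j·V(τ_i+1, 1) + (1−p_j)·V(τ_i+1, τ_j+1), then for every τ_i' ≥ τ_i, p_i·V(1, τ_j+1) + (1−p_i)·V(τ_i'+1, τ_j+1) ≥ p_j·V(τ_i'+1, 1) + (1−p_j)·V(τ_i'+1, τ_j+1). -/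
/-- Probabilistic supermodularity of a coordinatewise-nonincreasing value
    function implies the AoI-state threshold implication (core of Theorem 2). -/
theorem prob_supermodular_threshold
    (V : ℕ × ℕ → ℝ) (pi pj : ℝ)
    (hpi : pi ∈ Set.Icc (0 : ℝ) 1) (hpj : pj ∈ Set.Icc (0 : ℝ) 1)
    (hij : pi ≤ pj)
    (hmono : Antitone V)
    (hsup : ∀ τi τj τi'' τj' : ℕ, τi'' ≤ τi → τj ≤ τj' →
      pj * V (τi'', τj) + (pj - pi) * V (τi, τj') ≥
        pj * V (τi, τj) + (pj - pi) * V (τi'', τj'))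
    (τi τj : ℕ)
    (hopt : pi * V (1, τj + 1) + (1 - pi) * V (τi + 1, τj + 1) ≥
      pj * V (τi + 1, 1) + (1 - pj) * V (τi + 1, τj + 1)) :
    ∀ τi' : ℕ, τi ≤ τi' →
      pi * V (1, τj + 1) + (1 - pi) * V (τi' + 1, τj + 1) ≥
        pj * V (τi' + 1, 1) + (1 - pj) * V (τi' + 1, τj + 1) := by
  intro τi' h
  have hs := hsup (τi' + 1) 1 (τi + 1) (τj + 1) (by omega) (by omega)
  linarith
end

section
/- In the two-sensor-single-channel MDP, if V : ℕ × ℕ → ℝ is coordinatewise nonincreasing, then for any τ_i, τ_j and any success probabilities p_i, p_j ∈ [0,1] with p_i ≥ p_j, the inequality p_i·V(1, τ_j+1) ≥ p_j·V(τ_i+1, 1) + (p_i − p_j)·V(τ_i+1, τ_j+1) implies for all τ_i' ≥ τ_i: p_i·V(1, τ_j+1) + (1 − p_i)·V(τ_i'+1, τ_j+1) ≥ p_j·V(τ_i'+1, 1) + (1 − p_j)·V(τ_i'+1, τ_j+1). -/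
/-- Proposition 1 deduction: coordinatewise monotonicity alone propagates the
    one-step optimality inequality to every larger AoI. -/
theorem monotone_propagation
    (V : ℕ × ℕ → ℝ) (hV : Antitone V)
    (pi pj : ℝ)
    (hpi : pi ∈ Set.Icc (0 : ℝ) 1) (hpj : pj ∈ Set.Icc (0 : ℝ) 1)
    (hij : pj ≤ pi)
    (τi τj : ℕ)
    (h : pi * V (1, τj + 1) ≥
      pj * V (τi + 1, 1) + (pi - pj) * V (τi + 1, τj + 1)) :
    ∀ τi' : ℕ, τi ≤ τi' →
      pi * V (1, τj + 1) + (1 - pi) * V (τi' + 1, τj + 1) ≥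
        pj * V (τi' + 1, 1) + (1 - pj) * V (τi' + 1, τj + 1) := by
  intro τi' hτ
  have h1 : V (τi' + 1, 1) ≤ V (τi + 1, 1) := hV (by simp [Prod.le_def]; omega)
  have h2 : V (τi' + 1, τj + 1) ≤ V (τi + 1, τj + 1) := hV (by simp [Prod.le_def]; omega)
  nlinarith [hpj.1, mul_le_mul_of_nonneg_left h1 hpj.1,
    mul_le_mul_of_nonneg_left h2 (sub_nonneg.mpr hij)]
end
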